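/- Let Λ be a group and let w = Σ_{r,s} e_{rs} ⊗ w_{r,s} be a unitary matrix over a unital C*-algebra (or *-algebra) A indexed by Λ×Λ. Suppose that for every t ∈ Λ the operator T_t : ℓ²(Λ)⊗ℓ²(Λ) → ℓ²(Λ), T_t(e_r ⊗ e_s) = δ_{s,t⁻¹} e_{rt}, intertwines w ⊗ w and w, i.e. (T_t ⊗ 1)(w₁₃ w₂₃) = w (T_t ⊗ 1) as maps ℓ²(Λ)⊗ℓ²(Λ)⊗A → ℓ²(Λ)⊗A (where w acts coordinatewise). Then w is diagonal: w_{c,j} = 0 whenever c ≠ j, and each diagonal entry w_{j,j} is unitary. -/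
import Mathlib


/-- Let `w = (w r s)_{r,s ∈ Λ}` be a unitary matrix over a unital `*`-algebra.  If for
every `t ∈ Λ` the partition operator `T_t (e_r ⊗ e_s) = δ_{s,t⁻¹} e_{r t}` intertwines
`w ⊗ w` and `w` — coefficientwise:
`w (γ t⁻¹) r * w t⁻¹ s = δ_{s,t⁻¹} ⋅ w γ (r t)` for all `γ, r, s, t` —
then `w` is diagonal, and every diagonal entry is unitary. -/
theorem stmt19 {Λ Aₐ : Type*} [Group Λ] [Fintype Λ] [DecidableEq Λ]
    [Ring Aₐ] [StarRing Aₐ]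
    (w : Λ → Λ → Aₐ)
    (hcol : ∀ r s : Λ, ∑ a : Λ, star (w a r) * w a s = if r = s then 1 else 0)
    (hrow : ∀ r s : Λ, ∑ a : Λ, w r a * star (w s a) = if r = s then 1 else 0)
    (hintertwine : ∀ γ r s t : Λ,
      w (γ * t⁻¹) r * w t⁻¹ s = if s = t⁻¹ then w γ (r * t) else 0) :
    (∀ c j : Λ, c ≠ j → w c j = 0) ∧
      ∀ j : Λ, star (w j j) * w j j = 1 ∧ w j j * star (w j j) = 1 := by
  have hz : ∀ c j : Λ, c ≠ j → w c j = 0 := by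
    intro c j hcj
    have h0 : ∀ a : Λ, w a 1 * w c j = 0 := by
      intro a
      have h := hintertwine (a * c⁻¹) 1 j c⁻¹
      simpa [mul_assoc, Ne.symm hcj] using h
    calc w c j = 1 * w c j := (one_mul _).symm
    _ = (∑ a : Λ, star (w a 1) * w a 1) * w c j := by
        rw [hcol]; simp
    _ = ∑ a : Λ, star (w a 1) * (w a 1 * w c j) := by
        rw [Finset.sum_mul]; simp [mul_assoc]
    _ = 0 := by simp [h0]
  refine ⟨hz, fun j => ⟨?_, ?_⟩⟩
  · have h := hcol j j
    rw [Finset.sum_eq_single j] at h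
    · simpa using h
    · intro b _ hb; rw [hz b j hb]; simp
    · simp
  · have h := hrow j j
    rw [Finset.sum_eq_single j] at h
    · simpa using h
    · intro b _ hb; rw [hz j b (Ne.symm hb)]; simp
    · simp
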